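/- Let 𝒮 be a nonempty set of positive definite density matrices on ℂ^{d_A} ⊗ ℂ^{d_B} that is invariant under conjugation by every product unitary U_A ⊗ U_B, and define E(τ) = inf_{σ∈𝒮} S(τ‖σ). Let Λ(ρ) = ∑_i (P_i ⊗ I) ρ (P_i ⊗ I) be a local dephasing of the first factor, where P_1,…,P_k are pairwise orthogonal projections on ℂ^{d_A} with ∑_i P_i = I. Then for every density matrix ρ on ℂ^{d_A} ⊗ ℂ^{d_B}: E(ρ) − E(Λ(ρ)) ≤ S(Λ(ρ)) − S(ρ); that is, the relative entropy distance to 𝒮 decreases by no more than the entropy increases under local dephasing. -/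

import Mathlib

open Matrix
open scoped Kronecker ComplexOrder

/-- von Neumann entropy in bits (with convention `0 * log₂ 0 = 0`). -/
noncomputable def vnEntropy {n : Type*} [Fintype n] [DecidableEq n] (A : Matrix n n ℂ) : ℝ :=
  if h : A.IsHermitian then -∑ i, h.eigenvalues i * Real.logb 2 (h.eigenvalues i) else 0

/-- `log₂` of a Hermitian matrix via the spectral functional calculus. -/
noncomputable def matLog2 {n : Type*} [Fintype n] [DecidableEq n] (A : Matrix n n ℂ) :
    Matrix n n ℂ :=
  if h : A.IsHermitian then h.cfc (Real.logb 2) else 0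

/-- relative entropy `S(ρ‖σ) = tr(ρ log₂ ρ) − tr(ρ log₂ σ)` (in bits). -/
noncomputable def relEnt {n : Type*} [Fintype n] [DecidableEq n] (ρ σ : Matrix n n ℂ) : ℝ :=
  ((ρ * matLog2 ρ).trace).re - ((ρ * matLog2 σ).trace).re

/-!
Pinching argument. For a primitive `k`-th root of unity `ω`, the matrices
`W j = ∑ i, ω ^ (i * j) • P i` are unitary and `∑ j, (W j ⊗ 1) X (W j ⊗ 1)ᴴ = k • Λ X`. Since
`log₂` commutes with unitary conjugation, `tr (Λ ρ log₂ σ) = tr (ρ Λ (log₂ σ))` is the average of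
`tr (ρ log₂ σⱼ)` over the states `σⱼ = (W j ⊗ 1) σ (W j ⊗ 1)ᴴ`, which lie in `𝒮`. Some `j` does at
least as well as the average, and for it `S(ρ‖σⱼ) ≤ S(Λ ρ‖σ) + S(Λ ρ) - S(ρ)`. Taking infima over
`σ` gives the claim; the infima are over sets bounded below by `-S(ρ)`, because `log₂ σ ≤ 0` for a
density matrix `σ`.
-/

open scoped MatrixOrder ComplexConjugate

lemma csInf_le_csInf_add_of_forall_exists_le {A B : Set ℝ} {c : ℝ} (hA : BddBelow A)
    (hB : B.Nonempty) (h : ∀ b ∈ B, ∃ a ∈ A, a ≤ b + c) : sInf A ≤ sInf B + c := by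
  rw [← sub_le_iff_le_add]
  refine le_csInf hB fun b hb => ?_
  obtain ⟨a, ha, hab⟩ := h b hb
  exact sub_le_iff_le_add.mpr ((csInf_le hA ha).trans hab)

section Pinching

def dephasing {R ι : Type*} [NonUnitalNonAssocSemiring R] [Fintype ι] (Q : ι → R) (X : R) : R :=
  ∑ i, Q i * X * Q i

lemma IsSelfAdjoint.dephasing {R ι : Type*} [NonUnitalSemiring R] [StarRing R] [Fintype ι]
    {Q : ι → R} (hQ : ∀ i, IsSelfAdjoint (Q i)) {X : R} (hX : IsSelfAdjoint X) :
    IsSelfAdjoint (dephasing Q X) :=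
  isSelfAdjoint_sum _ fun i _ => by simpa only [(hQ i).star_eq] using hX.conjugate (Q i)

variable {R : Type*} [Ring R] [StarRing R] [Algebra ℂ R] [StarModule ℂ R]
  {k : ℕ} {Q : Fin k → R} {ω : ℂ}

def pinchingUnitary (ω : ℂ) (Q : Fin k → R) (j : Fin k) : R :=
  ∑ i : Fin k, ω ^ ((i : ℕ) * j) • Q i

lemma star_pinchingUnitary (hQ : ∀ i, IsSelfAdjoint (Q i)) (ω : ℂ) (j : Fin k) :
    star (pinchingUnitary ω Q j) = pinchingUnitary (conj ω) Q j := by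
  simp only [pinchingUnitary, star_sum, star_smul, (hQ _).star_eq, star_pow, Complex.star_def]

lemma pinchingUnitary_mul_mul_star (hQ : ∀ i, IsSelfAdjoint (Q i)) (ω : ℂ) (j : Fin k) (X : R) :
    pinchingUnitary ω Q j * X * star (pinchingUnitary ω Q j) =
      ∑ i : Fin k, ∑ l : Fin k, (ω ^ ((i : ℕ) * j) * conj ω ^ ((l : ℕ) * j)) • (Q i * X * Q l) := by
  rw [star_pinchingUnitary hQ, pinchingUnitary, pinchingUnitary, Finset.sum_mul, Finset.sum_mul]
  refine Finset.sum_congr rfl fun i _ => ?_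
  rw [Finset.mul_sum]
  refine Finset.sum_congr rfl fun l _ => ?_
  rw [smul_mul_assoc, smul_mul_assoc, mul_smul_comm, smul_smul]

lemma pinchingUnitary_mul_star (hQ : ∀ i, IsStarProjection (Q i))
    (horth : Pairwise fun i l => Q i * Q l = 0) (hsum : ∑ i, Q i = 1) (hω : ‖ω‖ = 1) (j : Fin k) :
    pinchingUnitary ω Q j * star (pinchingUnitary ω Q j) = 1 := by
  have hωω : ∀ m : ℕ, ω ^ m * conj ω ^ m = 1 := fun m => by
    rw [← mul_pow, Complex.mul_conj', hω]
    simp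
  have hexp := pinchingUnitary_mul_mul_star (fun i => (hQ i).isSelfAdjoint) ω j 1
  simp only [mul_one] at hexp
  rw [hexp, ← hsum]
  refine Finset.sum_congr rfl fun i _ => ?_
  rw [Finset.sum_eq_single i (fun l _ hli => by rw [horth (Ne.symm hli), smul_zero])
    (by simp), (hQ i).isIdempotentElem.eq, hωω, one_smul]

lemma pinchingUnitary_mem_unitary (hQ : ∀ i, IsStarProjection (Q i))
    (horth : Pairwise fun i l => Q i * Q l = 0) (hsum : ∑ i, Q i = 1) (hω : ‖ω‖ = 1) (j : Fin k) :
    pinchingUnitary ω Q j ∈ unitary R := by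
  refine Unitary.mem_iff.mpr ⟨?_, pinchingUnitary_mul_star hQ horth hsum hω j⟩
  have hstar := star_pinchingUnitary (fun i => (hQ i).isSelfAdjoint) ω j
  rw [hstar, ← star_star (pinchingUnitary ω Q j), hstar]
  exact pinchingUnitary_mul_star hQ horth hsum (by rwa [Complex.norm_conj]) j

lemma IsPrimitiveRoot.sum_pow_mul_conj_pow (hω : IsPrimitiveRoot ω k) (i l : Fin k) :
    ∑ j : Fin k, ω ^ ((i : ℕ) * j) * conj ω ^ ((l : ℕ) * j) = if i = l then (k : ℂ) else 0 := by
  have hωω : ω * conj ω = 1 := by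
    rw [Complex.mul_conj', hω.norm'_eq_one i.pos.ne']
    simp
  set z := ω ^ (i : ℕ) * conj ω ^ (l : ℕ)
  have hz : ∀ j : ℕ, ω ^ ((i : ℕ) * j) * conj ω ^ ((l : ℕ) * j) = z ^ j := fun j => by
    rw [mul_pow, pow_mul, pow_mul]
  simp only [hz]
  rw [Fin.sum_univ_eq_sum_range (z ^ ·)]
  split_ifs with hil
  · subst hil
    simp [z, ← mul_pow, hωω]
  · have hz1 : z ≠ 1 := fun h => hil <| Fin.ext <| hω.pow_inj i.isLt l.isLt <| by
      rw [← mul_one (ω ^ (i : ℕ)), ← one_pow (l : ℕ), ← hωω, mul_pow, mul_comm (ω ^ (l : ℕ)),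
        ← mul_assoc, show ω ^ (i : ℕ) * conj ω ^ (l : ℕ) = z from rfl, h, one_mul]
    have hzk : z ^ k = 1 := by
      rw [mul_pow, ← pow_mul, ← pow_mul, mul_comm (i : ℕ), mul_comm (l : ℕ), pow_mul, pow_mul,
        hω.pow_eq_one, ← map_pow, hω.pow_eq_one]
      simp
    have := geom_sum_mul z k
    rw [hzk, sub_self] at this
    exact (mul_eq_zero.mp this).resolve_right (sub_ne_zero.mpr hz1)

lemma sum_pinchingUnitary_mul_mul_star (hQ : ∀ i, IsSelfAdjoint (Q i)) (hω : IsPrimitiveRoot ω k)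
    (X : R) :
    ∑ j, pinchingUnitary ω Q j * X * star (pinchingUnitary ω Q j) = (k : ℂ) • dephasing Q X := by
  simp only [pinchingUnitary_mul_mul_star hQ]
  rw [Finset.sum_comm, dephasing, Finset.smul_sum]
  refine Finset.sum_congr rfl fun i _ => ?_
  rw [Finset.sum_comm]
  simp only [← Finset.sum_smul, hω.sum_pow_mul_conj_pow, ite_smul, zero_smul,
    Finset.sum_ite_eq, Finset.mem_univ, if_true]

end Pinching

namespace Matrix

variable {𝕜 n : Type*} [RCLike 𝕜] [Fintype n] [DecidableEq n]

lemma IsHermitian.trace_cfc {A : Matrix n n 𝕜} (hA : A.IsHermitian) (f : ℝ → ℝ) :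
    (cfc f A).trace = ∑ i, (f (hA.eigenvalues i) : 𝕜) := by
  rw [hA.cfc_eq, IsHermitian.cfc, Unitary.conjStarAlgAut_apply, trace_mul_cycle,
    Unitary.coe_star_mul_self, one_mul, trace_diagonal]
  rfl

lemma IsHermitian.trace_mul_cfc {A : Matrix n n 𝕜} (hA : A.IsHermitian) (f : ℝ → ℝ) :
    (A * cfc f A).trace = ∑ i, ((hA.eigenvalues i * f (hA.eigenvalues i) : ℝ) : 𝕜) := by
  nth_rewrite 1 [← cfc_id' ℝ A]
  rw [← cfc_mul _ _ A (finite_real_spectrum.continuousOn _) (finite_real_spectrum.continuousOn _)]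
  exact hA.trace_cfc _

lemma PosSemidef.eigenvalues_le_re_trace {A : Matrix n n 𝕜} (hA : A.PosSemidef) (i : n) :
    hA.1.eigenvalues i ≤ RCLike.re A.trace := by
  rw [hA.1.trace_eq_sum_eigenvalues, ← RCLike.ofReal_sum, RCLike.ofReal_re]
  exact Finset.single_le_sum (fun j _ => hA.eigenvalues_nonneg j) (Finset.mem_univ i)

lemma PosSemidef.trace_mul_nonneg {A B : Matrix n n 𝕜} (hA : A.PosSemidef) (hB : B.PosSemidef) :
    0 ≤ (A * B).trace := by
  obtain ⟨X, rfl⟩ := CStarAlgebra.nonneg_iff_eq_star_mul_self.mp hB.nonneg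
  rw [← mul_assoc, trace_mul_comm, ← mul_assoc, star_eq_conjTranspose]
  exact (hA.mul_mul_conjTranspose_same X).trace_nonneg

section

variable {l m n p α : Type*}

lemma sum_kronecker [NonUnitalNonAssocSemiring α] {ι : Type*} (s : Finset ι)
    (A : ι → Matrix l m α) (B : Matrix n p α) : (∑ i ∈ s, A i) ⊗ₖ B = ∑ i ∈ s, A i ⊗ₖ B := by
  ext ⟨a, b⟩ ⟨c, d⟩
  simp [sum_apply, Finset.sum_mul]

lemma _root_.IsStarProjection.kronecker [Fintype m] [Fintype n] [CommRing α] [StarRing α]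
    {P : Matrix m m α} {Q : Matrix n n α} (hP : IsStarProjection P) (hQ : IsStarProjection Q) :
    IsStarProjection (P ⊗ₖ Q) where
  isIdempotentElem := by
    rw [IsIdempotentElem, ← mul_kronecker_mul, hP.isIdempotentElem.eq, hQ.isIdempotentElem.eq]
  isSelfAdjoint := by
    rw [IsSelfAdjoint, star_eq_conjTranspose, conjTranspose_kronecker, ← star_eq_conjTranspose,
      ← star_eq_conjTranspose, hP.isSelfAdjoint.star_eq, hQ.isSelfAdjoint.star_eq]

lemma trace_dephasing_mul [Fintype n] [CommSemiring α] {ι : Type*} [Fintype ι]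
    (Q : ι → Matrix n n α) (X Y : Matrix n n α) :
    (dephasing Q X * Y).trace = (X * dephasing Q Y).trace := by
  simp only [dephasing, Finset.sum_mul, Finset.mul_sum, trace_sum]
  refine Finset.sum_congr rfl fun i _ => ?_
  simp only [mul_assoc]
  rw [trace_mul_comm (Q i)]
  simp only [mul_assoc]

end

end Matrix

variable {n : Type*} [Fintype n] [DecidableEq n]

lemma matLog2_eq_cfc {A : Matrix n n ℂ} (hA : A.IsHermitian) : matLog2 A = cfc (Real.logb 2) A := by
  rw [matLog2, dif_pos hA, hA.cfc_eq]

lemma re_trace_mul_matLog2_self {A : Matrix n n ℂ} (hA : A.IsHermitian) :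
    (A * matLog2 A).trace.re = -vnEntropy A := by
  rw [matLog2_eq_cfc hA, hA.trace_mul_cfc, vnEntropy, dif_pos hA, neg_neg, Complex.re_sum]
  rfl

lemma relEnt_eq_neg_vnEntropy_sub {ρ : Matrix n n ℂ} (hρ : ρ.IsHermitian) (σ : Matrix n n ℂ) :
    relEnt ρ σ = -vnEntropy ρ - (ρ * matLog2 σ).trace.re := by
  rw [relEnt, re_trace_mul_matLog2_self hρ]

lemma matLog2_nonpos {σ : Matrix n n ℂ} (hσ : σ.PosDef) (hσtr : σ.trace = 1) : matLog2 σ ≤ 0 := by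
  rw [matLog2_eq_cfc hσ.1]
  refine cfc_nonpos _ _ fun x hx => ?_
  obtain ⟨i, rfl⟩ := hσ.1.spectrum_real_eq_range_eigenvalues ▸ hx
  refine Real.logb_nonpos one_lt_two (hσ.eigenvalues_pos i).le ?_
  simpa [hσtr] using hσ.posSemidef.eigenvalues_le_re_trace i

lemma neg_vnEntropy_le_relEnt {ρ σ : Matrix n n ℂ} (hρ : ρ.PosSemidef) (hσ : σ.PosDef)
    (hσtr : σ.trace = 1) : -vnEntropy ρ ≤ relEnt ρ σ := by
  have h := hρ.trace_mul_nonneg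
    (nonneg_iff_posSemidef.mp (neg_nonneg.mpr (matLog2_nonpos hσ hσtr)))
  rw [mul_neg, trace_neg] at h
  have h' := (Complex.nonneg_iff.mp h).1
  rw [Complex.neg_re] at h'
  rw [relEnt_eq_neg_vnEntropy_sub hρ.1]
  linarith

lemma matLog2_unitary_conj (u : unitary (Matrix n n ℂ)) {A : Matrix n n ℂ} (hA : A.IsHermitian) :
    matLog2 ((u : Matrix n n ℂ) * A * star (u : Matrix n n ℂ)) =
      u * matLog2 A * star (u : Matrix n n ℂ) := by
  have hA' : (u * A * star (u : Matrix n n ℂ)).IsHermitian := hA.isSelfAdjoint.conjugate _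
  rw [matLog2_eq_cfc hA, matLog2_eq_cfc hA', ← Unitary.conjStarAlgAut_apply (S := ℂ) u A,
    ← Unitary.conjStarAlgAut_apply (S := ℂ), StarAlgHomClass.map_cfc (S := ℂ) _ _ _
      (finite_real_spectrum.continuousOn _)
      ((continuous_const.mul continuous_id).mul continuous_const)]

lemma exists_relEnt_conj_pinchingUnitary_le {k : ℕ} [NeZero k] {Q : Fin k → Matrix n n ℂ}
    (hQ : ∀ i, IsStarProjection (Q i)) (horth : Pairwise fun i l => Q i * Q l = 0)
    (hsum : ∑ i, Q i = 1) {ω : ℂ} (hω : IsPrimitiveRoot ω k) {ρ σ : Matrix n n ℂ}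
    (hρ : ρ.IsHermitian) (hσ : σ.IsHermitian) :
    ∃ j, relEnt ρ (pinchingUnitary ω Q j * σ * star (pinchingUnitary ω Q j)) ≤
      relEnt (dephasing Q ρ) σ + vnEntropy (dephasing Q ρ) - vnEntropy ρ := by
  have hQsa : ∀ i, IsSelfAdjoint (Q i) := fun i => (hQ i).isSelfAdjoint
  set W := pinchingUnitary ω Q
  have hW : ∀ j, W j ∈ unitary (Matrix n n ℂ) :=
    pinchingUnitary_mem_unitary hQ horth hsum (hω.norm'_eq_one (NeZero.ne k))
  have havg : ∑ j, (ρ * (W j * matLog2 σ * star (W j))).trace.re =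
      ∑ _j : Fin k, (dephasing Q ρ * matLog2 σ).trace.re := by
    rw [← Complex.re_sum, ← trace_sum, ← Finset.mul_sum, sum_pinchingUnitary_mul_mul_star hQsa hω,
      mul_smul_comm, trace_smul, trace_dephasing_mul]
    simp
  obtain ⟨j, -, hj⟩ := Finset.exists_le_of_sum_le Finset.univ_nonempty havg.ge
  refine ⟨j, ?_⟩
  rw [relEnt_eq_neg_vnEntropy_sub hρ, relEnt_eq_neg_vnEntropy_sub (hρ.isSelfAdjoint.dephasing hQsa),
    matLog2_unitary_conj ⟨W j, hW j⟩ hσ]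
  linarith

theorem relEnt_dist_decrease_le_entropy_increase_of_local_dephasing
    {dA dB k : ℕ}
    (𝒮 : Set (Matrix (Fin dA × Fin dB) (Fin dA × Fin dB) ℂ))
    (h𝒮ne : 𝒮.Nonempty)
    (h𝒮 : ∀ σ ∈ 𝒮, σ.PosDef ∧ σ.trace = 1)
    (h𝒮inv : ∀ (UA : Matrix (Fin dA) (Fin dA) ℂ) (UB : Matrix (Fin dB) (Fin dB) ℂ),
      UA ∈ Matrix.unitaryGroup (Fin dA) ℂ → UB ∈ Matrix.unitaryGroup (Fin dB) ℂ →
      ∀ σ ∈ 𝒮, (UA ⊗ₖ UB) * σ * (UA ⊗ₖ UB)ᴴ ∈ 𝒮)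
    (E : Matrix (Fin dA × Fin dB) (Fin dA × Fin dB) ℂ → ℝ)
    (hE : ∀ τ, E τ = sInf {r : ℝ | ∃ σ ∈ 𝒮, r = relEnt τ σ})
    (P : Fin k → Matrix (Fin dA) (Fin dA) ℂ)
    (hPherm : ∀ i, (P i).IsHermitian)
    (hPidem : ∀ i, P i * P i = P i)
    (hPorth : ∀ i j, i ≠ j → P i * P j = 0)
    (hPsum : ∑ i, P i = 1)
    (Λ : Matrix (Fin dA × Fin dB) (Fin dA × Fin dB) ℂ →
         Matrix (Fin dA × Fin dB) (Fin dA × Fin dB) ℂ)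
    (hΛ : ∀ τ, Λ τ = ∑ i, (P i ⊗ₖ (1 : Matrix (Fin dB) (Fin dB) ℂ)) * τ *
        (P i ⊗ₖ (1 : Matrix (Fin dB) (Fin dB) ℂ)))
    (ρ : Matrix (Fin dA × Fin dB) (Fin dA × Fin dB) ℂ)
    (hρ : ρ.PosSemidef) :
    E ρ - E (Λ ρ) ≤ vnEntropy (Λ ρ) - vnEntropy ρ := by
  rcases Nat.eq_zero_or_pos k with rfl | hk
  -- with no projections, `∑ i, P i = 1` forces `dA = 0`
  · have : IsEmpty (Fin dA) := ⟨fun a => by simpa using congrFun₂ hPsum a a⟩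
    rw [Subsingleton.elim (Λ ρ) ρ, sub_self, sub_self]
  have : NeZero k := ⟨hk.ne'⟩
  obtain ⟨ω, hω⟩ : ∃ ω : ℂ, IsPrimitiveRoot ω k := ⟨_, Complex.isPrimitiveRoot_exp k hk.ne'⟩
  have hP : ∀ i, IsStarProjection (P i) := fun i => ⟨hPidem i, hPherm i⟩
  have hPorth' : Pairwise fun i l => P i * P l = 0 := fun i l => hPorth i l
  set Q := fun i => P i ⊗ₖ (1 : Matrix (Fin dB) (Fin dB) ℂ)
  have hW : ∀ j, pinchingUnitary ω Q j = pinchingUnitary ω P j ⊗ₖ 1 := fun j => by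
    simp only [pinchingUnitary, sum_kronecker, smul_kronecker, Q]
  have hΛρ : Λ ρ = dephasing Q ρ := hΛ ρ
  rw [hE, hE, sub_le_iff_le_add', hΛρ]
  obtain ⟨σ₀, hσ₀⟩ := h𝒮ne
  apply csInf_le_csInf_add_of_forall_exists_le
  · refine ⟨-vnEntropy ρ, ?_⟩
    rintro _ ⟨σ, hσ, rfl⟩
    exact neg_vnEntropy_le_relEnt hρ (h𝒮 σ hσ).1 (h𝒮 σ hσ).2
  · exact ⟨_, σ₀, hσ₀, rfl⟩
  rintro _ ⟨σ, hσ, rfl⟩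
  obtain ⟨j, hj⟩ := exists_relEnt_conj_pinchingUnitary_le (fun i => (hP i).kronecker (.one _))
    (fun i l h => by simp only [← mul_kronecker_mul, hPorth' h, zero_kronecker])
    (by rw [← sum_kronecker, hPsum, one_kronecker_one]) hω hρ.1 (h𝒮 σ hσ).1.1
  have hσj := h𝒮inv _ 1 (pinchingUnitary_mem_unitary hP hPorth' hPsum (hω.norm'_eq_one hk.ne') j)
    (one_mem _) σ hσ
  rw [← hW, ← star_eq_conjTranspose] at hσj
  exact ⟨_, ⟨_, hσj, rfl⟩, by linarith⟩
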